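/- The elementary transposition generators of the seaweed monoid are idempotent under implicit distance multiplication: P_t^Σ ⊙ P_t^Σ = P_t^Σ for every elementary transposition matrix P_t. -/

import Mathlib

/-!
`P_t^Σ(i, j) = (j - i)⁺ + [i = j = t]`: the swap of `t - 1` and `t` changes the dominance count
of the identity only at `(t, t)`. This function satisfies the triangle inequality, so the
`(min, +)` square is at least `P_t^Σ`, and the minimum is attained at `j = t + 1` when
`i = t ≤ k`, at `j = k` when `k < i = t`, and at `j = i` otherwise.
-/

def PermMat {n : ℕ} (σ : Equiv.Perm (Fin n)) : Fin n → Fin n → ℤ :=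
  fun i j => if σ i = j then 1 else 0

def distSum {m n : ℕ} (D : Fin m → Fin n → ℤ) (i : Fin (m+1)) (j : Fin (n+1)) : ℤ :=
  ∑ p : Fin m, ∑ q : Fin n, if (i : ℕ) ≤ (p : ℕ) ∧ (q : ℕ) < (j : ℕ) then D p q else 0

def distProd {n : ℕ} (A B : Fin (n+1) → Fin (n+1) → ℤ) (i k : Fin (n+1)) : ℤ :=
  Finset.univ.inf' Finset.univ_nonempty (fun j => A i j + B j k)

lemma distSum_permMat {n : ℕ} (σ : Equiv.Perm (Fin n)) (i j : Fin (n + 1)) :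
    distSum (PermMat σ) i j =
      ∑ p : Fin n, if (i : ℕ) ≤ p ∧ (σ p : ℕ) < j then 1 else 0 := by
  refine Finset.sum_congr rfl fun p _ => ?_
  rw [Fintype.sum_eq_single (σ p) fun q hq => by simp [PermMat, Ne.symm hq]]
  simp [PermMat]

lemma sum_fin_ite_le_and_lt {n i j : ℕ} (hj : j ≤ n) :
    (∑ p : Fin n, if i ≤ (p : ℕ) ∧ (p : ℕ) < j then (1 : ℤ) else 0) = (j - i : ℕ) := by
  rw [Fin.sum_univ_eq_sum_range (fun p => if i ≤ p ∧ p < j then (1 : ℤ) else 0),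
    Finset.sum_boole, ← Nat.card_Ico]
  congr 2
  ext p
  simp only [Finset.mem_filter, Finset.mem_range, Finset.mem_Ico]
  omega

/-- The truncated subtraction `j - i` is `(j - i)⁺`. -/
def swapDistSum (t i j : ℕ) : ℤ := (j - i : ℕ) + if i = t ∧ j = t then 1 else 0

lemma distSum_permMat_swap {n t : ℕ} (ht : 1 ≤ t) (htn : t < n) (i j : Fin (n + 1)) :
    distSum (PermMat (Equiv.swap (⟨t - 1, by omega⟩ : Fin n) ⟨t, htn⟩)) i j =
      swapDistSum t i j := by
  set a : Fin n := ⟨t - 1, by omega⟩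
  set b : Fin n := ⟨t, htn⟩
  have hab : a ≠ b := Fin.ne_of_val_ne (show t - 1 ≠ t by omega)
  set f : Fin n → ℤ := fun p => if (i : ℕ) ≤ p ∧ (Equiv.swap a b p : ℕ) < j then 1 else 0
  set g : Fin n → ℤ := fun p => if (i : ℕ) ≤ p ∧ (p : ℕ) < j then 1 else 0
  have hfg : ∑ p, (f p - g p) = (f a - g a) + (f b - g b) :=
    Fintype.sum_eq_add a b hab fun p hp => by
      simp [f, g, Equiv.swap_apply_of_ne_of_ne hp.1 hp.2]
  have hg : ∑ p, g p = (j - i : ℕ) := sum_fin_ite_le_and_lt (by omega)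
  rw [distSum_permMat, swapDistSum, ← hg, ← sub_eq_iff_eq_add', ← Finset.sum_sub_distrib]
  simp only [hfg, f, g, Equiv.swap_apply_left, Equiv.swap_apply_right, a, b]
  split_ifs <;> omega

lemma swapDistSum_le_add (t i j k : ℕ) :
    swapDistSum t i k ≤ swapDistSum t i j + swapDistSum t j k := by
  unfold swapDistSum
  split_ifs <;> omega

lemma exists_swapDistSum_add_le {n t i k : ℕ} (htn : t < n) (hi : i ≤ n) (hk : k ≤ n) :
    ∃ j ≤ n, swapDistSum t i j + swapDistSum t j k ≤ swapDistSum t i k := by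
  unfold swapDistSum
  by_cases hit : i = t
  · by_cases htk : t ≤ k
    · exact ⟨t + 1, htn, by split_ifs <;> omega⟩
    · exact ⟨k, hk, by split_ifs <;> omega⟩
  · exact ⟨i, hi, by split_ifs <;> omega⟩

lemma distProd_eq_of_le {n : ℕ} {A B C : Fin (n + 1) → Fin (n + 1) → ℤ} {i k : Fin (n + 1)}
    (hle : ∀ j, C i k ≤ A i j + B j k) (j : Fin (n + 1)) (hj : A i j + B j k ≤ C i k) :
    distProd A B i k = C i k :=
  le_antisymm ((Finset.inf'_le _ (Finset.mem_univ j)).trans hj)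
    (Finset.le_inf' _ _ fun j _ => hle j)

/-- elementary transposition generators are idempotent:
`P_t^Σ ⊙ P_t^Σ = P_t^Σ`. -/
theorem seaweed_idempotent {n : ℕ} (t : ℕ) (h1 : 1 ≤ t) (h2 : t ≤ n - 1)
    (Pt : Fin n → Fin n → ℤ)
    (hPt : Pt = PermMat (Equiv.swap (⟨t - 1, by omega⟩ : Fin n) ⟨t, by omega⟩)) :
    ∀ i k : Fin (n+1),
      distProd (distSum Pt) (distSum Pt) i k = distSum Pt i k := by
  set D : Fin (n + 1) → Fin (n + 1) → ℤ := fun i j => swapDistSum t i j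
  have hD : distSum Pt = D := by
    funext i j
    rw [hPt, distSum_permMat_swap h1]
  intro i k
  obtain ⟨j, hjn, hj⟩ :=
    exists_swapDistSum_add_le (t := t) (by omega) (Nat.le_of_lt_succ i.2) (Nat.le_of_lt_succ k.2)
  rw [hD]
  exact distProd_eq_of_le (fun j => swapDistSum_le_add t i j k) ⟨j, Nat.lt_succ_of_le hjn⟩ hj
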